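/- Let ψ: V₁ → V₂ be a linear isomorphism between finite-dimensional real vector spaces carrying Randers norms Z_i = √(a_i) + β_i with Zermelo data (h_i, W_i), i = 1,2. Then the following are equivalent: (a) Z₂ ∘ ψ = Z₁; (b) ψ*a₂ = a₁ and ψ*β₂ = β₁; (c) ψ*h₂ = h₁ and ψ(W₁) = W₂. -/

import Mathlib

/-!
A Randers norm `‖v‖ + ⟪v, B⟫` determines its data: `‖v‖` and `⟪v, B⟫` are its even and odd
parts. Its Zermelo data `(h, W)` determine them as well, since `h(W, W) = ⟪B, B⟫` fixes
`μ = 1 - ⟪B, B⟫`, then `h(·, W) = -μ⟪·, B⟫` fixes `B`, and `h` with `B` fixes the inner product.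
Conversely, a linear isometry `ψ` with `⟪ψ ·, B₂⟫ = ⟪·, B₁⟫` sends `B₁` to `B₂` and hence carries
the Zermelo data of `B₁` to those of `B₂`.
-/

open scoped RealInnerProductSpace

section Randers

variable {E F : Type*} [NormedAddCommGroup E] [InnerProductSpace ℝ E]
  [NormedAddCommGroup F] [InnerProductSpace ℝ F]

def randersNorm (B v : E) : ℝ := ‖v‖ + ⟪v, B⟫

def zermeloMetric (B w u : E) : ℝ := (1 - ⟪B, B⟫) * (⟪w, u⟫ - ⟪B, w⟫ * ⟪B, u⟫)

noncomputable def zermeloWind (B : E) : E := -((1 - ⟪B, B⟫)⁻¹ • B)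

theorem randersNorm_add_randersNorm_neg (B v : E) :
    randersNorm B v + randersNorm B (-v) = 2 * ‖v‖ := by
  simp only [randersNorm, norm_neg, inner_neg_left]
  ring

theorem randersNorm_sub_randersNorm_neg (B v : E) :
    randersNorm B v - randersNorm B (-v) = 2 * ⟪v, B⟫ := by
  simp only [randersNorm, norm_neg, inner_neg_left]
  ring

theorem randersNorm_comp_eq_iff {B₁ : E} {B₂ : F} (f : E →ₗ[ℝ] F) :
    (∀ v, randersNorm B₂ (f v) = randersNorm B₁ v) ↔
      (∀ u w, ⟪f u, f w⟫ = ⟪u, w⟫) ∧ ∀ u, ⟪f u, B₂⟫ = ⟪u, B₁⟫ := by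
  rw [← LinearMap.norm_map_iff_inner_map_map]
  constructor
  · intro hf
    refine ⟨fun v => ?_, fun v => ?_⟩
    · have := randersNorm_add_randersNorm_neg B₂ (f v)
      rw [← map_neg, hf, hf, randersNorm_add_randersNorm_neg] at this
      linarith
    · have := randersNorm_sub_randersNorm_neg B₂ (f v)
      rw [← map_neg, hf, hf, randersNorm_sub_randersNorm_neg] at this
      linarith
  · rintro ⟨hnorm, hβ⟩ v
    rw [randersNorm, randersNorm, hnorm, hβ]

theorem zermeloMetric_zermeloWind_right (B u : E) :
    zermeloMetric B u (zermeloWind B) = -((1 - ⟪B, B⟫) * ⟪u, B⟫) := by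
  simp only [zermeloMetric, zermeloWind, inner_neg_right, real_inner_smul_right]
  rw [real_inner_comm u B]
  linear_combination (-⟪u, B⟫) * mul_self_mul_inv (1 - ⟪B, B⟫)

theorem zermeloMetric_zermeloWind_zermeloWind {B : E} (hB : ⟪B, B⟫ ≠ 1) :
    zermeloMetric B (zermeloWind B) (zermeloWind B) = ⟪B, B⟫ := by
  have hμ : 1 - ⟪B, B⟫ ≠ 0 := sub_ne_zero.mpr hB.symm
  rw [zermeloMetric_zermeloWind_right, zermeloWind, inner_neg_left, real_inner_smul_left,
    mul_neg, neg_neg, mul_inv_cancel_left₀ hμ]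

theorem LinearIsometry.zermeloMetric_map (e : E →ₗᵢ[ℝ] F) (B u w : E) :
    zermeloMetric (e B) (e u) (e w) = zermeloMetric B u w := by
  simp only [zermeloMetric, e.inner_map_map]

theorem LinearIsometry.map_zermeloWind (e : E →ₗᵢ[ℝ] F) (B : E) :
    e (zermeloWind B) = zermeloWind (e B) := by
  simp only [zermeloWind, map_neg, map_smul, e.inner_map_map]

theorem LinearIsometryEquiv.inner_map_eq_iff {B₁ : E} {B₂ : F} (e : E ≃ₗᵢ[ℝ] F) :
    (∀ u, ⟪e u, B₂⟫ = ⟪u, B₁⟫) ↔ e B₁ = B₂ := by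
  simp_rw [e.inner_map_eq_flip, ← ext_iff_inner_left, e.symm_apply_eq, eq_comm]

theorem inner_map_map_of_zermelo {B₁ : E} {B₂ : F} (hB₁ : ⟪B₁, B₁⟫ ≠ 1) (hB₂ : ⟪B₂, B₂⟫ ≠ 1)
    (f : E →ₗ[ℝ] F) (hh : ∀ u w, zermeloMetric B₂ (f u) (f w) = zermeloMetric B₁ u w)
    (hW : f (zermeloWind B₁) = zermeloWind B₂) :
    (∀ u w, ⟪f u, f w⟫ = ⟪u, w⟫) ∧ ∀ u, ⟪f u, B₂⟫ = ⟪u, B₁⟫ := by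
  have hμ₁ : 1 - ⟪B₁, B₁⟫ ≠ 0 := sub_ne_zero.mpr hB₁.symm
  have hμ : 1 - ⟪B₂, B₂⟫ = 1 - ⟪B₁, B₁⟫ := by
    have := hh (zermeloWind B₁) (zermeloWind B₁)
    rw [hW, zermeloMetric_zermeloWind_zermeloWind hB₁,
      zermeloMetric_zermeloWind_zermeloWind hB₂] at this
    rw [this]
  have hβ (u : E) : ⟪f u, B₂⟫ = ⟪u, B₁⟫ := by
    have := hh u (zermeloWind B₁)
    rw [hW, zermeloMetric_zermeloWind_right, zermeloMetric_zermeloWind_right, hμ,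
      neg_inj] at this
    exact mul_left_cancel₀ hμ₁ this
  have hβ' (u : E) : ⟪B₂, f u⟫ = ⟪B₁, u⟫ := by rw [real_inner_comm, hβ, real_inner_comm]
  refine ⟨fun u w => ?_, hβ⟩
  have := hh u w
  rw [zermeloMetric, zermeloMetric, hμ, hβ', hβ'] at this
  linarith [mul_left_cancel₀ hμ₁ this]

end Randers

theorem randers_isometry_equiv_general {V₁ V₂ : Type*}
    [NormedAddCommGroup V₁] [InnerProductSpace ℝ V₁]
    [NormedAddCommGroup V₂] [InnerProductSpace ℝ V₂]
    (ψ : V₁ ≃ₗ[ℝ] V₂) (B₁ : V₁) (B₂ : V₂) (hB₁ : ⟪B₁, B₁⟫ < 1) (hB₂ : ⟪B₂, B₂⟫ < 1)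
    (Z₁ : V₁ → ℝ) (hZ₁ : ∀ v : V₁, Z₁ v = Real.sqrt ⟪v, v⟫ + ⟪v, B₁⟫)
    (Z₂ : V₂ → ℝ) (hZ₂ : ∀ v : V₂, Z₂ v = Real.sqrt ⟪v, v⟫ + ⟪v, B₂⟫)
    (μ₁ μ₂ : ℝ) (hμ₁ : μ₁ = 1 - ⟪B₁, B₁⟫) (hμ₂ : μ₂ = 1 - ⟪B₂, B₂⟫)
    (h₁ : V₁ → V₁ → ℝ) (hh₁ : ∀ w u : V₁, h₁ w u = μ₁ * (⟪w, u⟫ - ⟪B₁, w⟫ * ⟪B₁, u⟫))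
    (h₂ : V₂ → V₂ → ℝ) (hh₂ : ∀ w u : V₂, h₂ w u = μ₂ * (⟪w, u⟫ - ⟪B₂, w⟫ * ⟪B₂, u⟫))
    (W₁ : V₁) (hW₁ : W₁ = -(μ₁⁻¹ • B₁)) (W₂ : V₂) (hW₂ : W₂ = -(μ₂⁻¹ • B₂)) :
    ((∀ v : V₁, Z₂ (ψ v) = Z₁ v) ↔
      ((∀ u w : V₁, ⟪ψ u, ψ w⟫ = ⟪u, w⟫) ∧ (∀ u : V₁, ⟪ψ u, B₂⟫ = ⟪u, B₁⟫))) ∧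
    (((∀ u w : V₁, ⟪ψ u, ψ w⟫ = ⟪u, w⟫) ∧ (∀ u : V₁, ⟪ψ u, B₂⟫ = ⟪u, B₁⟫)) ↔
      ((∀ u w : V₁, h₂ (ψ u) (ψ w) = h₁ u w) ∧ ψ W₁ = W₂)) := by
  obtain rfl : Z₁ = randersNorm B₁ :=
    funext fun v => by rw [hZ₁, randersNorm, norm_eq_sqrt_real_inner]
  obtain rfl : Z₂ = randersNorm B₂ :=
    funext fun v => by rw [hZ₂, randersNorm, norm_eq_sqrt_real_inner]
  subst hμ₁ hμ₂ hW₁ hW₂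
  obtain rfl : h₁ = zermeloMetric B₁ := funext₂ hh₁
  obtain rfl : h₂ = zermeloMetric B₂ := funext₂ hh₂
  refine ⟨randersNorm_comp_eq_iff ψ.toLinearMap, ?_, fun ⟨hh, hW⟩ =>
    inner_map_map_of_zermelo hB₁.ne hB₂.ne ψ.toLinearMap hh hW⟩
  rintro ⟨ha, hβ⟩
  let e := ψ.isometryOfInner ha
  obtain rfl : ψ B₁ = B₂ := e.inner_map_eq_iff.1 hβ
  exact ⟨e.toLinearIsometry.zermeloMetric_map B₁, e.toLinearIsometry.map_zermeloWind B₁⟩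

/-- For a linear isomorphism `ψ` between spaces carrying Randers norms
`Z_i = √(a_i) + β_i` (with `a_i` the inner products, `β_i(v) = a_i(v, B_i)`) with Zermelo data
`(h_i, W_i)`, the following are equivalent: (a) `Z₂ ∘ ψ = Z₁`; (b) `ψ*a₂ = a₁` and
`ψ*β₂ = β₁`; (c) `ψ*h₂ = h₁` and `ψ(W₁) = W₂`. -/
theorem randers_isometry_equiv {V₁ V₂ : Type*}
    [NormedAddCommGroup V₁] [InnerProductSpace ℝ V₁] [FiniteDimensional ℝ V₁]
    [NormedAddCommGroup V₂] [InnerProductSpace ℝ V₂] [FiniteDimensional ℝ V₂]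
    (ψ : V₁ ≃ₗ[ℝ] V₂) (B₁ : V₁) (B₂ : V₂) (hB₁ : ⟪B₁, B₁⟫ < 1) (hB₂ : ⟪B₂, B₂⟫ < 1)
    (Z₁ : V₁ → ℝ) (hZ₁ : ∀ v : V₁, Z₁ v = Real.sqrt ⟪v, v⟫ + ⟪v, B₁⟫)
    (Z₂ : V₂ → ℝ) (hZ₂ : ∀ v : V₂, Z₂ v = Real.sqrt ⟪v, v⟫ + ⟪v, B₂⟫)
    (μ₁ μ₂ : ℝ) (hμ₁ : μ₁ = 1 - ⟪B₁, B₁⟫) (hμ₂ : μ₂ = 1 - ⟪B₂, B₂⟫)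
    (h₁ : V₁ → V₁ → ℝ) (hh₁ : ∀ w u : V₁, h₁ w u = μ₁ * (⟪w, u⟫ - ⟪B₁, w⟫ * ⟪B₁, u⟫))
    (h₂ : V₂ → V₂ → ℝ) (hh₂ : ∀ w u : V₂, h₂ w u = μ₂ * (⟪w, u⟫ - ⟪B₂, w⟫ * ⟪B₂, u⟫))
    (W₁ : V₁) (hW₁ : W₁ = -(μ₁⁻¹ • B₁)) (W₂ : V₂) (hW₂ : W₂ = -(μ₂⁻¹ • B₂)) :
    ((∀ v : V₁, Z₂ (ψ v) = Z₁ v) ↔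
      ((∀ u w : V₁, ⟪ψ u, ψ w⟫ = ⟪u, w⟫) ∧ (∀ u : V₁, ⟪ψ u, B₂⟫ = ⟪u, B₁⟫))) ∧
    (((∀ u w : V₁, ⟪ψ u, ψ w⟫ = ⟪u, w⟫) ∧ (∀ u : V₁, ⟪ψ u, B₂⟫ = ⟪u, B₁⟫)) ↔
      ((∀ u w : V₁, h₂ (ψ u) (ψ w) = h₁ u w) ∧ ψ W₁ = W₂)) :=
  randers_isometry_equiv_general ψ B₁ B₂ hB₁ hB₂ Z₁ hZ₁ Z₂ hZ₂ μ₁ μ₂ hμ₁ hμ₂ h₁ hh₁ h₂ hh₂ W₁ hW₁ W₂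
    hW₂
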